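/- arXiv:1802.08407 — 4 statements merged into one kernel-verified Lean document; each statement's English description precedes it below -/
import Mathlib

section
/- Let X be a finite set and let P, Q be probability measures on X. Let x_1,…,x_n be i.i.d. with law P and y_1,…,y_m be i.i.d. with law Q (jointly independent), and let n = n_t, m = m_t be sequences of positive integers tending to infinity with n_t/(n_t+m_t) → c for some c ∈ (0,1). Then for every set Γ of pairs of probability measures on X, limsup_{t→∞} −(1/(n_t+m_t)) · log (P^{⊗n_t} ⊗ Q^{⊗m_t})((P̂_{n_t}, Q̂_{m_t}) ∈ Γ) ≤ inf over (R,S) in the interior of Γ of c·D(R‖P) + (1−c)·D(S‖Q), where the interior is taken in the product topology on the probability simplex over X times itself. -/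
open MeasureTheory Filter Set
open scoped ENNReal NNReal

noncomputable section

/-- The empirical measure of the sample `x = (x 1, …, x n)`:  `(1/n) ∑ i, δ_{x i}`. -/
def empMeas {X : Type*} [MeasurableSpace X] {n : ℕ} (x : Fin n → X) : Measure X :=
  (n : ℝ≥0∞)⁻¹ • ∑ i, Measure.dirac (x i)

lemma empMeas_isProb {X : Type*} [MeasurableSpace X] {n : ℕ} (hn : n ≠ 0) (x : Fin n → X) :
    IsProbabilityMeasure (empMeas x) := by
  constructor
  simp only [empMeas, Measure.smul_apply, Measure.finset_sum_apply, measure_univ,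
    Finset.sum_const, Finset.card_univ, Fintype.card_fin, nsmul_eq_mul, mul_one, smul_eq_mul]
  exact ENNReal.inv_mul_cancel (by exact_mod_cast hn) (ENNReal.natCast_ne_top n)

/-- The empirical measure, as a probability measure (requires `n ≠ 0`). -/
def empProb {X : Type*} [MeasurableSpace X] {n : ℕ} (hn : n ≠ 0) (x : Fin n → X) :
    ProbabilityMeasure X := ⟨empMeas x, empMeas_isProb hn x⟩

open Classical in
/-- Kullback–Leibler divergence `D(R‖P) = ∫ log (dR/dP) dR` if `R ≪ P` (and the integral is
well defined), `+∞` otherwise. -/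
def KL {X : Type*} [MeasurableSpace X] (R P : Measure X) : ℝ≥0∞ :=
  if R ≪ P ∧ Integrable (llr R P) R then ENNReal.ofReal (∫ x, llr R P x ∂ R) else ⊤

/-- Extended-real logarithm of an extended-nonnegative real, with `elog 0 = ⊥`. -/
def elog (x : ℝ≥0∞) : EReal :=
  if x = 0 then ⊥ else if x = ⊤ then ⊤ else ((Real.log x.toReal : ℝ) : EReal)

/-! Fix `(R, S)` in the interior of `Γ`, with `R ≪ P` and `S ≪ Q` (otherwise the bound is `∞`).
Call a sample `x ∈ Xⁿ` typical if its empirical measure is `δ`-close to `R`, its empirical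
log-likelihood ratio `(1/n) ∑ log (dR/dP)(xᵢ)` is at most `D(R‖P) + ε`, and every `xᵢ` is an atom
of `R`. By Chebyshev's inequality (the weak law of large numbers) typical samples have
`R^⊗n`-probability at least `1/2` for large `n`, and on each of them
`P^⊗n {x} = exp (-∑ log (dR/dP)(xᵢ)) R^⊗n {x} ≥ exp (-n (D(R‖P) + ε)) R^⊗n {x}`.
For `δ` small the typical samples land in a neighbourhood `U` of `R` with `U × V ⊆ Γ`, so the
probability in the theorem is at least `exp (-n (D(R‖P) + ε) - m (D(S‖Q) + ε)) / 4`; take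
`-(1/(n+m)) log`, let `t → ∞` and then `ε → 0`. -/

open ProbabilityTheory Topology Real

section WeakLaw

variable {Ω : Type*} [MeasurableSpace Ω] (μ : Measure Ω) [IsProbabilityMeasure μ] {f : Ω → ℝ}

theorem measure_pi_abs_sum_div_sub_integral_ge_le (hf : MemLp f 2 μ) {ε : ℝ} (hε : 0 < ε)
    {n : ℕ} (hn : n ≠ 0) :
    (Measure.pi fun _ : Fin n => μ) {x | ε ≤ |(∑ i, f (x i)) / n - ∫ y, f y ∂μ|}
      ≤ ENNReal.ofReal (Var[f; μ] / ε ^ 2 / n) := by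
  set S : (Fin n → Ω) → ℝ := fun x => (n : ℝ)⁻¹ * (∑ i, fun x : Fin n → Ω => f (x i)) x
  have hS_memLp : MemLp S 2 (Measure.pi fun _ : Fin n => μ) :=
    (memLp_finsetSum' _ fun i _ => hf.comp_measurePreserving
      (measurePreserving_eval _ i)).const_mul _
  have hS_mean : ∫ x, S x ∂(Measure.pi fun _ : Fin n => μ) = ∫ y, f y ∂μ := by
    simp only [S, Finset.sum_apply, integral_const_mul]
    rw [integral_finsetSum _ fun i _ => integrable_comp_eval (hf.integrable one_le_two)]
    simp only [integral_comp_eval (μ := fun _ : Fin n => μ) hf.aestronglyMeasurable,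
      Finset.sum_const, Finset.card_univ, Fintype.card_fin, nsmul_eq_mul]
    field_simp
  have hS_var : Var[S; Measure.pi fun _ : Fin n => μ] = Var[f; μ] / n := by
    rw [variance_const_mul, variance_sum_pi fun _ => hf]
    simp only [inv_pow, Finset.sum_const, Finset.card_univ, Fintype.card_fin, nsmul_eq_mul]
    field_simp
  have hS : ∀ x, S x = (∑ i, f (x i)) / n := fun x => by
    simp only [S, Finset.sum_apply, div_eq_inv_mul]
  calc _ = (Measure.pi fun _ : Fin n => μ)
        {x | ε ≤ |S x - ∫ x, S x ∂(Measure.pi fun _ : Fin n => μ)|} := by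
        rw [hS_mean]; simp only [hS]
    _ ≤ _ := meas_ge_le_variance_div_sq hS_memLp hε
    _ = _ := by rw [hS_var]; ring_nf

theorem tendsto_measure_pi_abs_sum_div_sub_integral_ge (hf : MemLp f 2 μ) {ε : ℝ}
    (hε : 0 < ε) :
    Tendsto (fun n : ℕ => (Measure.pi fun _ : Fin n => μ)
      {x | ε ≤ |(∑ i, f (x i)) / n - ∫ y, f y ∂μ|}) atTop (𝓝 0) := by
  have h : Tendsto (fun n : ℕ => ENNReal.ofReal (Var[f; μ] / ε ^ 2 / n)) atTop (𝓝 0) := by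
    simpa using ENNReal.tendsto_ofReal (tendsto_const_div_atTop_nhds_zero_nat _)
  refine tendsto_of_tendsto_of_tendsto_of_le_of_le' tendsto_const_nhds h
    (Eventually.of_forall fun _ => zero_le) ?_
  filter_upwards [eventually_ne_atTop 0] with n hn
  exact measure_pi_abs_sum_div_sub_integral_ge_le μ hf hε hn

theorem integral_empMeas [MeasurableSingletonClass Ω] {n : ℕ} (x : Fin n → Ω) (f : Ω → ℝ) :
    ∫ y, f y ∂(empMeas x) = (∑ i, f (x i)) / n := by
  rw [empMeas, integral_smul_measure, integral_finsetSum_measure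
    fun i _ => integrable_dirac enorm_lt_top]
  simp only [ENNReal.toReal_inv, ENNReal.toReal_natCast, integral_dirac, smul_eq_mul,
    div_eq_inv_mul]

theorem tendsto_measure_pi_abs_integral_empMeas_sub_ge [MeasurableSingletonClass Ω]
    (hf : MemLp f 2 μ) {ε : ℝ} (hε : 0 < ε) :
    Tendsto (fun n : ℕ => (Measure.pi fun _ : Fin n => μ)
      {x | ε ≤ |∫ y, f y ∂(empMeas x) - ∫ y, f y ∂μ|}) atTop (𝓝 0) := by
  simpa only [integral_empMeas] using tendsto_measure_pi_abs_sum_div_sub_integral_ge μ hf hε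

end WeakLaw

section ChangeOfMeasure

variable {Ω : Type*} [MeasurableSpace Ω] [MeasurableSingletonClass Ω] {R P : Measure Ω}

theorem measure_singleton_eq_rnDeriv_mul [SigmaFinite R] [SigmaFinite P] (hRP : R ≪ P)
    (a : Ω) : R {a} = R.rnDeriv P a * P {a} := by
  rw [← Measure.setLIntegral_rnDeriv hRP, lintegral_singleton]

theorem ofReal_exp_llr [IsFiniteMeasure R] [SigmaFinite P] (hRP : R ≪ P) {a : Ω}
    (ha : R {a} ≠ 0) : ENNReal.ofReal (exp (llr R P a)) = R.rnDeriv P a := by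
  have h := measure_singleton_eq_rnDeriv_mul hRP a
  have h0 : R.rnDeriv P a ≠ 0 := fun h0 => ha (by rw [h, h0, zero_mul])
  have htop : R.rnDeriv P a ≠ ⊤ := fun htop => by
    have hP : P {a} ≠ 0 := fun hP => ha (hRP hP)
    exact measure_ne_top R {a} (by rw [h, htop, ENNReal.top_mul hP])
  rw [llr, exp_log (ENNReal.toReal_pos h0 htop), ENNReal.ofReal_toReal htop]

theorem measure_pi_singleton_eq_ofReal_exp_mul [IsFiniteMeasure R] [SigmaFinite P]
    (hRP : R ≪ P) {n : ℕ} {x : Fin n → Ω} (hx : ∀ i, R {x i} ≠ 0) :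
    (Measure.pi fun _ : Fin n => R) {x}
      = ENNReal.ofReal (exp (∑ i, llr R P (x i))) * (Measure.pi fun _ : Fin n => P) {x} := by
  simp only [← Set.univ_pi_singleton x, Measure.pi_pi, exp_sum,
    ENNReal.ofReal_prod_of_nonneg fun i _ => (exp_pos _).le, ← Finset.prod_mul_distrib]
  exact Finset.prod_congr rfl fun i _ => by
    rw [ofReal_exp_llr hRP (hx i), ← measure_singleton_eq_rnDeriv_mul hRP]

end ChangeOfMeasure

section TypicalSet

variable {Y : Type*} [Fintype Y] [MeasurableSpace Y] (R P : Measure Y)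

def typicalSet (δ ε : ℝ) (n : ℕ) : Set (Fin n → Y) :=
  {x | (∀ a, |(empMeas x).real {a} - R.real {a}| < δ)
    ∧ ∫ y, llr R P y ∂(empMeas x) ≤ ∫ y, llr R P y ∂(R) + ε ∧ ∀ i, R {x i} ≠ 0}

theorem compl_typicalSet_ae_subset [IsProbabilityMeasure R] {δ ε : ℝ} (n : ℕ) :
    (typicalSet R P δ ε n)ᶜ ≤ᵐ[Measure.pi fun _ : Fin n => R]
      ((⋃ a, {x | δ ≤ |(empMeas x).real {a} - R.real {a}|})
        ∪ {x | ε ≤ |∫ y, llr R P y ∂(empMeas x) - ∫ y, llr R P y ∂(R)|} : Set (Fin n → Y)) := by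
  have hatoms : ∀ᵐ x ∂(Measure.pi fun _ : Fin n => R), ∀ i, R {x i} ≠ 0 :=
    ae_all_iff.2 fun i => (measurePreserving_eval _ i).quasiMeasurePreserving.ae
      (ae_iff_of_countable.2 fun _ h => h)
  filter_upwards [hatoms] with x hx hxG
  replace hxG : ¬ (_ ∧ _ ∧ _) := hxG
  simp only [not_and_or, not_forall, not_lt, not_le] at hxG
  rcases hxG with ⟨a, ha⟩ | hllr | ⟨i, hi⟩
  · exact Or.inl (Set.mem_iUnion.2 ⟨a, ha⟩)
  · exact Or.inr (show ε ≤ |_| from le_abs.2 (Or.inl (by linarith)))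
  · exact absurd (hx i) hi

variable [MeasurableSingletonClass Y]

theorem tendsto_measure_pi_compl_typicalSet [IsProbabilityMeasure R] {δ ε : ℝ} (hδ : 0 < δ)
    (hε : 0 < ε) :
    Tendsto (fun n => (Measure.pi fun _ : Fin n => R) (typicalSet R P δ ε n)ᶜ) atTop (𝓝 0) := by
  have hfreq (a : Y) : Tendsto (fun n => (Measure.pi fun _ : Fin n => R)
      {x | δ ≤ |(empMeas x).real {a} - R.real {a}|}) atTop (𝓝 0) := by
    simpa only [integral_indicator_one (measurableSet_singleton a)] using
      tendsto_measure_pi_abs_integral_empMeas_sub_ge R (f := ({a} : Set Y).indicator 1)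
        MemLp.of_discrete hδ
  have hllr := tendsto_measure_pi_abs_integral_empMeas_sub_ge R (f := llr R P)
    MemLp.of_discrete hε
  refine tendsto_of_tendsto_of_tendsto_of_le_of_le tendsto_const_nhds
    (by simpa using (tendsto_finsetSum Finset.univ fun a _ => hfreq a).add hllr) (fun _ => zero_le)
    fun n => ?_
  exact (measure_mono_ae (compl_typicalSet_ae_subset R P n)).trans
    ((measure_union_le _ _).trans (add_le_add_left (measure_iUnion_fintype_le _ _) _))

theorem ofReal_exp_mul_measure_pi_typicalSet_le [IsFiniteMeasure R] [SigmaFinite P]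
    (hRP : R ≪ P) (δ ε : ℝ) (n : ℕ) :
    ENNReal.ofReal (exp (-(n * (∫ y, llr R P y ∂(R) + ε))))
        * (Measure.pi fun _ : Fin n => R) (typicalSet R P δ ε n)
      ≤ (Measure.pi fun _ : Fin n => P) (typicalSet R P δ ε n) := by
  classical
  rw [← Set.coe_toFinset (typicalSet R P δ ε n), ← sum_measure_singleton,
    ← sum_measure_singleton, Finset.mul_sum]
  refine Finset.sum_le_sum fun x hx => ?_
  obtain ⟨-, hllr, hatoms⟩ := Set.mem_toFinset.1 hx
  have hsum : ∑ i, llr R P (x i) ≤ n * (∫ y, llr R P y ∂(R) + ε) := by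
    rcases n.eq_zero_or_pos with rfl | hn
    · simp
    · rwa [integral_empMeas, div_le_iff₀ (by positivity), mul_comm] at hllr
  rw [measure_pi_singleton_eq_ofReal_exp_mul hRP hatoms, ← mul_assoc,
    ← ENNReal.ofReal_mul (exp_pos _).le, ← exp_add]
  exact mul_le_of_le_one_left zero_le
    (ENNReal.ofReal_le_one.2 (exp_le_one_iff.2 (by linarith)))

theorem eventually_ofReal_exp_le_measure_pi_typicalSet [IsProbabilityMeasure R]
    [SigmaFinite P] (hRP : R ≪ P) {δ ε : ℝ} (hδ : 0 < δ) (hε : 0 < ε) :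
    ∀ᶠ n : ℕ in atTop, ENNReal.ofReal (exp (-(n * (∫ y, llr R P y ∂(R) + ε) + log 2)))
      ≤ (Measure.pi fun _ : Fin n => P) (typicalSet R P δ ε n) := by
  filter_upwards [(tendsto_order.1 (tendsto_measure_pi_compl_typicalSet R P hδ hε)).2 2⁻¹
    (by norm_num)] with n hn
  have hhalf : 2⁻¹ ≤ (Measure.pi fun _ : Fin n => R) (typicalSet R P δ ε n) := by
    have hsum := measure_add_measure_compl (μ := Measure.pi fun _ : Fin n => R)
      (MeasurableSet.of_discrete (s := typicalSet R P δ ε n))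
    by_contra! hlt
    have := ENNReal.add_lt_add hlt hn
    rw [hsum, measure_univ, ENNReal.inv_two_add_inv_two] at this
    exact lt_irrefl _ this
  calc ENNReal.ofReal (exp (-(n * (∫ y, llr R P y ∂(R) + ε) + log 2)))
      = ENNReal.ofReal (exp (-(n * (∫ y, llr R P y ∂(R) + ε)))) * 2⁻¹ := by
        rw [neg_add, exp_add, exp_neg (log 2), exp_log two_pos, ENNReal.ofReal_mul (exp_pos _).le,
          ENNReal.ofReal_inv_of_pos two_pos, ENNReal.ofReal_ofNat]
    _ ≤ _ := mul_le_mul_right hhalf _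
    _ ≤ _ := ofReal_exp_mul_measure_pi_typicalSet_le R P hRP δ ε n

end TypicalSet

section ProbabilityMeasureTopology

variable {X : Type*} [Fintype X] [TopologicalSpace X] [DiscreteTopology X] [MeasurableSpace X]
  [BorelSpace X]

theorem exists_pos_forall_abs_measureReal_sub_lt_mem (R : ProbabilityMeasure X)
    {U : Set (ProbabilityMeasure X)} (hU : U ∈ 𝓝 R) :
    ∃ δ > 0, ∀ ν : ProbabilityMeasure X,
      (∀ a, |(ν : Measure X).real {a} - (R : Measure X).real {a}| < δ) → ν ∈ U := by
  by_contra! hcon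
  choose ν hν hνU using fun k : ℕ => hcon (1 / (k + 1)) Nat.one_div_pos_of_nat
  have htend : Tendsto ν atTop (𝓝 R) := by
    rw [ProbabilityMeasure.tendsto_iff_forall_integral_tendsto]
    intro f
    simp only [integral_fintype Integrable.of_finite]
    refine tendsto_finsetSum _ fun a _ => Tendsto.smul_const ?_ _
    exact tendsto_iff_norm_sub_tendsto_zero.2 (squeeze_zero (fun _ => norm_nonneg _)
      (fun k => (hν k a).le) tendsto_one_div_add_atTop_nhds_zero_nat)
  obtain ⟨k, hk⟩ := (htend.eventually hU).exists
  exact hνU k hk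

theorem eventually_ofReal_exp_le_measure_pi_empProb_mem (P : Measure X) [SigmaFinite P]
    {R : ProbabilityMeasure X} (hRP : (R : Measure X) ≪ P) {U : Set (ProbabilityMeasure X)}
    (hU : U ∈ 𝓝 R) {ε : ℝ} (hε : 0 < ε) :
    ∀ᶠ n : ℕ in atTop, ∀ hn : n ≠ 0,
      ENNReal.ofReal (exp (-(n * (∫ y, llr R P y ∂(R : Measure X) + ε) + log 2)))
        ≤ (Measure.pi fun _ : Fin n => P) {x | empProb hn x ∈ U} := by
  obtain ⟨δ, hδ, hδU⟩ := exists_pos_forall_abs_measureReal_sub_lt_mem R hU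
  filter_upwards [eventually_ofReal_exp_le_measure_pi_typicalSet (R : Measure X) P hRP hδ hε]
    with n hn hn0
  exact hn.trans (measure_mono fun x hx => hδU _ hx.1)

end ProbabilityMeasureTopology

theorem absolutelyContinuous_of_KL_ne_top {Ω : Type*} [MeasurableSpace Ω] {R P : Measure Ω}
    (h : KL R P ≠ ⊤) : R ≪ P := by
  by_contra hRP
  exact h (if_neg fun h' => hRP h'.1)

theorem KL_eq_ofReal_integral_llr_of_ne_top {Ω : Type*} [MeasurableSpace Ω] {R P : Measure Ω}
    (h : KL R P ≠ ⊤) : KL R P = ENNReal.ofReal (∫ x, llr R P x ∂(R)) := by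
  unfold KL at h ⊢
  split_ifs at h ⊢
  · rfl
  · exact absurd rfl h

theorem EReal.coe_ennreal_iInf {ι : Sort*} (f : ι → ℝ≥0∞) :
    ((⨅ i, f i : ℝ≥0∞) : EReal) = ⨅ i, (f i : EReal) :=
  Monotone.map_iInf_of_continuousAt continuous_coe_ennreal_ereal.continuousAt
    (fun _ _ h => EReal.coe_ennreal_le_coe_ennreal_iff.2 h) EReal.coe_ennreal_top

theorem EReal.coe_le_coe_ennreal_ofReal (x : ℝ) : (x : EReal) ≤ (ENNReal.ofReal x : EReal) := by
  rw [EReal.coe_ennreal_ofReal]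
  exact_mod_cast le_max_left x 0

theorem neg_inv_mul_elog_le {N x : ℝ} (hN : 0 < N) {p : ℝ≥0∞}
    (hp : ENNReal.ofReal (exp (-x)) ≤ p) :
    ((-(1 / N) : ℝ) : EReal) * elog p ≤ ((x / N : ℝ) : EReal) := by
  have hp0 : p ≠ 0 := ((ENNReal.ofReal_pos.2 (exp_pos _)).trans_le hp).ne'
  have hneg : -(1 / N) < 0 := by simpa using hN
  rcases eq_or_ne p ⊤ with rfl | hpt
  · rw [elog, if_neg hp0, if_pos rfl, EReal.coe_mul_top_of_neg hneg]
    exact bot_le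
  rw [elog, if_neg hp0, if_neg hpt, ← EReal.coe_mul, EReal.coe_le_coe_iff]
  have hlog : -x ≤ log p.toReal := by
    rw [← log_exp (-x)]
    exact log_le_log (exp_pos _) ((ENNReal.ofReal_le_iff_le_toReal hpt).1 hp)
  calc -(1 / N) * log p.toReal ≤ -(1 / N) * -x := mul_le_mul_of_nonpos_left hlog hneg.le
    _ = x / N := by ring

theorem tendsto_mul_add_mul_add_div {ι : Type*} {l : Filter ι} {u v : ι → ℝ} {c : ℝ}
    (huv : Tendsto (fun i => u i + v i) l atTop)
    (hc : Tendsto (fun i => u i / (u i + v i)) l (𝓝 c)) (a b C : ℝ) :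
    Tendsto (fun i => (u i * a + v i * b + C) / (u i + v i)) l (𝓝 (c * a + (1 - c) * b)) := by
  have hlim : Tendsto (fun i => u i / (u i + v i) * a + (1 - u i / (u i + v i)) * b
      + C * (u i + v i)⁻¹) l (𝓝 (c * a + (1 - c) * b + C * 0)) :=
    ((hc.mul_const a).add ((tendsto_const_nhds.sub hc).mul_const b)).add
      (huv.inv_tendsto_atTop.const_mul C)
  rw [mul_zero, add_zero] at hlim
  refine hlim.congr' ?_
  filter_upwards [huv.eventually_ne_atTop 0] with i hi
  field_simp
  ring

theorem limsup_neg_inv_mul_elog_le_of_mem_nhds {X : Type*} [Fintype X] [TopologicalSpace X]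
    [DiscreteTopology X] [MeasurableSpace X] [BorelSpace X]
    (P Q : Measure X) [IsProbabilityMeasure P] [IsProbabilityMeasure Q]
    (n m : ℕ → ℕ) (hn : ∀ t, 0 < n t) (hm : ∀ t, 0 < m t)
    (hn' : Tendsto n atTop atTop) (hm' : Tendsto m atTop atTop) {c : ℝ}
    (hc : Tendsto (fun t => (n t : ℝ) / ((n t : ℝ) + (m t : ℝ))) atTop (𝓝 c))
    {Γ : Set (ProbabilityMeasure X × ProbabilityMeasure X)} {R S : ProbabilityMeasure X}
    (hΓ : Γ ∈ 𝓝 (R, S)) (hRP : (R : Measure X) ≪ P) (hSQ : (S : Measure X) ≪ Q)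
    {ε : ℝ} (hε : 0 < ε) :
    Filter.limsup (fun t =>
        ((-(1 / ((n t : ℝ) + (m t : ℝ))) : ℝ) : EReal) *
          elog (((Measure.pi fun _ : Fin (n t) => P).prod (Measure.pi fun _ : Fin (m t) => Q))
            {xy : (Fin (n t) → X) × (Fin (m t) → X) |
              (empProb (hn t).ne' xy.1, empProb (hm t).ne' xy.2) ∈ Γ})) atTop
      ≤ ((c * (∫ y, llr R P y ∂(R : Measure X) + ε)
          + (1 - c) * (∫ y, llr S Q y ∂(S : Measure X) + ε) : ℝ) : EReal) := by
  set D₁ := ∫ y, llr R P y ∂(R : Measure X)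
  set D₂ := ∫ y, llr S Q y ∂(S : Measure X)
  obtain ⟨U, hU, V, hV, hUV⟩ := mem_nhds_prod_iff.1 hΓ
  have hN : Tendsto (fun t => (n t : ℝ) + m t) atTop atTop :=
    (tendsto_natCast_atTop_atTop.comp hn').atTop_add_atTop (tendsto_natCast_atTop_atTop.comp hm')
  have hbound : ∀ᶠ t in atTop, ((-(1 / ((n t : ℝ) + (m t : ℝ))) : ℝ) : EReal) *
      elog (((Measure.pi fun _ : Fin (n t) => P).prod (Measure.pi fun _ : Fin (m t) => Q))
        {xy | (empProb (hn t).ne' xy.1, empProb (hm t).ne' xy.2) ∈ Γ})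
      ≤ (((n t * (D₁ + ε) + m t * (D₂ + ε) + 2 * log 2) / (n t + m t) : ℝ) : EReal) := by
    filter_upwards [hn'.eventually (eventually_ofReal_exp_le_measure_pi_empProb_mem P hRP hU hε),
      hm'.eventually (eventually_ofReal_exp_le_measure_pi_empProb_mem Q hSQ hV hε)]
      with t hPt hQt
    have hnt : (0 : ℝ) < n t := by exact_mod_cast hn t
    refine neg_inv_mul_elog_le (by positivity) ?_
    calc ENNReal.ofReal (exp (-(n t * (D₁ + ε) + m t * (D₂ + ε) + 2 * log 2)))
        = ENNReal.ofReal (exp (-(n t * (D₁ + ε) + log 2)))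
            * ENNReal.ofReal (exp (-(m t * (D₂ + ε) + log 2))) := by
          rw [← ENNReal.ofReal_mul (exp_pos _).le, ← exp_add]
          ring_nf
      _ ≤ _ := mul_le_mul' (hPt (hn t).ne') (hQt (hm t).ne')
      _ = _ := (Measure.prod_prod _ _).symm
      _ ≤ _ := measure_mono fun xy hxy => hUV (Set.mk_mem_prod hxy.1 hxy.2)
  calc _ ≤ _ := limsup_le_limsup hbound
    _ = _ := (EReal.tendsto_coe.2 (tendsto_mul_add_mul_add_div hN hc _ _ _)).limsup_eq

/-- **Extended Sanov theorem, finite sample space, upper bound.** -/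
theorem extended_sanov_finite_upper
    {X : Type*} [Fintype X] [TopologicalSpace X] [DiscreteTopology X]
    [MeasurableSpace X] [BorelSpace X]
    (P Q : Measure X) [IsProbabilityMeasure P] [IsProbabilityMeasure Q]
    (n m : ℕ → ℕ) (hn : ∀ t, 0 < n t) (hm : ∀ t, 0 < m t)
    (hn' : Tendsto n atTop atTop) (hm' : Tendsto m atTop atTop)
    (c : ℝ) (hc0 : 0 < c) (hc1 : c < 1)
    (hc : Tendsto (fun t => (n t : ℝ) / ((n t : ℝ) + (m t : ℝ))) atTop (nhds c))
    (Γ : Set (ProbabilityMeasure X × ProbabilityMeasure X)) :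
    Filter.limsup (fun t =>
        ((-(1 / ((n t : ℝ) + (m t : ℝ))) : ℝ) : EReal) *
          elog (((Measure.pi fun _ : Fin (n t) => P).prod (Measure.pi fun _ : Fin (m t) => Q))
            {xy : (Fin (n t) → X) × (Fin (m t) → X) |
              (empProb (hn t).ne' xy.1, empProb (hm t).ne' xy.2) ∈ Γ})) atTop
      ≤ ((⨅ RS ∈ interior Γ,
            ENNReal.ofReal c * KL (RS.1 : Measure X) P
              + ENNReal.ofReal (1 - c) * KL (RS.2 : Measure X) Q : ℝ≥0∞) : EReal) := by
  simp only [EReal.coe_ennreal_iInf]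
  refine le_iInf₂ fun ⟨R, S⟩ hRS => ?_
  by_cases hfin : KL (R : Measure X) P ≠ ⊤ ∧ KL (S : Measure X) Q ≠ ⊤
  swap
  · have hc0' : ENNReal.ofReal c ≠ 0 := by simpa using hc0
    have hc1' : ENNReal.ofReal (1 - c) ≠ 0 := by simpa using hc1
    rcases not_and_or.1 hfin with h | h <;> simp [not_not.1 h, hc0', hc1']
  set K := c * ∫ y, llr R P y ∂(R : Measure X) + (1 - c) * ∫ y, llr S Q y ∂(S : Measure X)
  calc _ ≤ (K : EReal) := EReal.le_of_forall_lt_iff_le.1 fun z hz => by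
        have hε : 0 < z - K := sub_pos.2 (EReal.coe_lt_coe_iff.1 hz)
        refine (limsup_neg_inv_mul_elog_le_of_mem_nhds P Q n m hn hm hn' hm' hc
          (mem_interior_iff_mem_nhds.1 hRS) (absolutelyContinuous_of_KL_ne_top hfin.1)
          (absolutelyContinuous_of_KL_ne_top hfin.2) hε).trans_eq ?_
        congr 1
        ring
    _ ≤ _ := by
        rw [KL_eq_ofReal_integral_llr_of_ne_top hfin.1, KL_eq_ofReal_integral_llr_of_ne_top hfin.2,
          ← ENNReal.ofReal_mul hc0.le, ← ENNReal.ofReal_mul (sub_nonneg.2 hc1.le)]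
        exact (EReal.coe_le_coe_ennreal_ofReal K).trans
          (EReal.coe_ennreal_le_coe_ennreal_iff.2 ENNReal.ofReal_add_le)
end
end

section
/- Let X be a finite set and let P, Q be probability measures on X. Let x_1,…,x_n be i.i.d. with law P and y_1,…,y_m be i.i.d. with law Q (jointly independent), and let n = n_t, m = m_t be sequences of positive integers tending to infinity with n_t/(n_t+m_t) → c for some c ∈ (0,1). Then for every set Γ of pairs of probability measures on X, liminf_{t→∞} −(1/(n_t+m_t)) · log (P^{⊗n_t} ⊗ Q^{⊗m_t})((P̂_{n_t}, Q̂_{m_t}) ∈ Γ) ≥ inf over (R,S) ∈ Γ of c·D(R‖P) + (1−c)·D(S‖Q). -/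
open MeasureTheory Filter Set
open scoped ENNReal NNReal

noncomputable section

/-!
Method of types. If `ν ≪ P` is the empirical measure of `x ∈ Xⁿ`, the likelihood ratio
`Pⁿ{x} / νⁿ{x} = ∏ᵢ P{xᵢ} / ν{xᵢ}` equals `exp (-n D(ν‖P))`, because integrating against `ν` is
averaging over the sample; if `ν` is not `≪ P`, some `xᵢ` is a `P`-null atom and `Pⁿ{x} = 0`.
Summing over the type class of `ν` gives `Pⁿ(T(ν)) ≤ exp (-n D(ν‖P))`.
There are at most `(n+1)^|X|` types, so the probability that `(P̂ₙ, Q̂ₘ) ∈ Γ` is at most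
`(n+1)^|X| (m+1)^|X| exp (-inf_Γ (n D(R‖P) + m D(S‖Q)))`; the polynomial factor is
subexponential. Finally, as `n/(n+m) → c`, eventually
`n D(R‖P) + m D(S‖Q) ≥ θ (n+m) (c D(R‖P) + (1-c) D(S‖Q))` on all of `Γ`, for any fixed `θ < 1`.
-/

section EmpiricalMeasure

variable {X : Type*} [MeasurableSpace X] [MeasurableSingletonClass X] {n : ℕ}

lemma empMeas_singleton_ne_zero (x : Fin n → X) (i : Fin n) : empMeas x {x i} ≠ 0 := by
  simp [empMeas]

lemma empMeas_absolutelyContinuous {P : Measure X} {x : Fin n → X} (h : ∀ i, P {x i} ≠ 0) :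
    empMeas x ≪ P := by
  intro S hS
  have hx : ∀ i, x i ∉ S := fun i hi => h i (measure_mono_null (Set.singleton_subset_iff.2 hi) hS)
  simp [empMeas, Measure.dirac_apply, hx]

lemma integral_empMeas_s1 [Finite X] (x : Fin n → X) (f : X → ℝ) :
    ∫ a, f a ∂empMeas x = (n : ℝ)⁻¹ * ∑ i, f (x i) := by
  rw [empMeas, integral_smul_measure, integral_finsetSum_measure fun i _ => Integrable.of_finite]
  simp [integral_dirac]

open Classical in
/-- Valued in `Fin (n + 1)`, so that there are `(n + 1) ^ |X|` possible types. -/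
def typeCount (x : Fin n → X) (a : X) : Fin (n + 1) :=
  ⟨(Finset.univ.filter fun i => x i = a).card,
    Nat.lt_succ_of_le ((Finset.card_filter_le _ _).trans (Finset.card_fin n).le)⟩

lemma empMeas_singleton (x : Fin n → X) (a : X) :
    empMeas x {a} = ((typeCount x a : ℕ) : ℝ≥0∞) / n := by
  classical
  simp [empMeas, typeCount, Set.indicator, Finset.sum_boole, ENNReal.div_eq_inv_mul]

lemma empProb_eq_of_typeCount_eq [Countable X] (hn : n ≠ 0) {x y : Fin n → X}
    (h : typeCount x = typeCount y) : empProb hn x = empProb hn y :=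
  Subtype.ext <| Measure.ext_iff_singleton.2 fun a => by
    simp only [empProb, empMeas_singleton, h]

end EmpiricalMeasure

section LogLikelihoodRatio

variable {X : Type*} [MeasurableSpace X] {R P : Measure X}

lemma integral_llr_nonneg [IsProbabilityMeasure R] [IsProbabilityMeasure P] (h : R ≪ P)
    (h_int : Integrable (llr R P) R) : 0 ≤ ∫ a, llr R P a ∂ R := by
  simpa using InformationTheory.integral_llr_add_sub_measure_univ_nonneg h h_int

variable [MeasurableSingletonClass X]

lemma KL_eq_ofReal_integral_llr [Finite X] [IsFiniteMeasure R] (h : R ≪ P) :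
    KL R P = ENNReal.ofReal (∫ a, llr R P a ∂ R) := by
  rw [KL, if_pos ⟨h, Integrable.of_finite⟩]

lemma rnDeriv_mul_measure_singleton [SigmaFinite R] [SigmaFinite P] (h : R ≪ P) (b : X) :
    R.rnDeriv P b * P {b} = R {b} := by
  rw [← lintegral_singleton, Measure.setLIntegral_rnDeriv h]

lemma measure_singleton_eq_exp_neg_llr_mul [IsFiniteMeasure R] [IsFiniteMeasure P] (h : R ≪ P)
    {b : X} (hb : R {b} ≠ 0) :
    P {b} = ENNReal.ofReal (Real.exp (-llr R P b)) * R {b} := by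
  have hd := rnDeriv_mul_measure_singleton h b
  have hd0 : R.rnDeriv P b ≠ 0 := fun h0 => hb (by rw [← hd, h0, zero_mul])
  have hdtop : R.rnDeriv P b ≠ ⊤ := fun ht => measure_ne_top R {b} <| by
    rw [← hd, ht, ENNReal.top_mul fun hP => hb (h hP)]
  rw [llr_def, Real.exp_neg, Real.exp_log (ENNReal.toReal_pos hd0 hdtop),
    ENNReal.ofReal_inv_of_pos (ENNReal.toReal_pos hd0 hdtop), ENNReal.ofReal_toReal hdtop, ← hd,
    ← mul_assoc, ENNReal.inv_mul_cancel hd0 hdtop, one_mul]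

end LogLikelihoodRatio

lemma measure_le_mul_of_forall_singleton_le {α : Type*} [MeasurableSpace α] [Finite α]
    [MeasurableSingletonClass α] {μ ν : Measure α} {C : ℝ≥0∞} {T : Set α}
    (h : ∀ x ∈ T, μ {x} ≤ C * ν {x}) : μ T ≤ C * ν T := by
  rw [← T.toFinite.coe_toFinset, ← sum_measure_singleton, ← sum_measure_singleton, Finset.mul_sum]
  exact Finset.sum_le_sum fun x hx => h x (T.toFinite.mem_toFinset.1 hx)

lemma measure_le_card_mul_of_forall_fiber_le {α β : Type*} [MeasurableSpace α] [Fintype β]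
    (μ : Measure α) (κ : α → β) {S : Set α} {B : ℝ≥0∞}
    (h : ∀ s ∈ S, μ (κ ⁻¹' {κ s}) ≤ B) : μ S ≤ Fintype.card β * B := by
  calc μ S ≤ μ (⋃ b, S ∩ κ ⁻¹' {b}) := measure_mono fun s hs => Set.mem_iUnion.2 ⟨κ s, hs, rfl⟩
    _ ≤ ∑ b, μ (S ∩ κ ⁻¹' {b}) := measure_iUnion_fintype_le μ _
    _ ≤ ∑ _b : β, B := Finset.sum_le_sum fun b _ => by
        rcases (S ∩ κ ⁻¹' {b}).eq_empty_or_nonempty with he | ⟨s, hs, rfl⟩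
        · simp [he]
        · exact (measure_mono Set.inter_subset_right).trans (h s hs)
    _ = Fintype.card β * B := by simp

section TypeClass

variable {X : Type*} [MeasurableSpace X] [MeasurableSingletonClass X] [Finite X]
  (P : Measure X) {n : ℕ}

lemma pi_singleton_eq_exp_neg_mul [IsFiniteMeasure P] (hn : n ≠ 0) {x : Fin n → X} (h : empMeas x ≪ P) :
    (Measure.pi fun _ : Fin n => P) {x} =
      ENNReal.ofReal (Real.exp (-(n * ∫ a, llr (empMeas x) P a ∂ empMeas x))) *
        (Measure.pi fun _ : Fin n => (empProb hn x : Measure X)) {x} := by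
  have := empMeas_isProb hn x
  rw [Measure.pi_singleton, Measure.pi_singleton, integral_empMeas_s1,
    mul_inv_cancel_left₀ (Nat.cast_ne_zero.2 hn), ← Finset.sum_neg_distrib, Real.exp_sum,
    ENNReal.ofReal_prod_of_nonneg fun _ _ => (Real.exp_pos _).le, ← Finset.prod_mul_distrib]
  exact Finset.prod_congr rfl fun i _ =>
    measure_singleton_eq_exp_neg_llr_mul h (empMeas_singleton_ne_zero x i)

variable [IsProbabilityMeasure P]

lemma pi_singleton_le_exp_neg_KL_mul (hn : n ≠ 0) (x : Fin n → X) :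
    (Measure.pi fun _ : Fin n => P) {x} ≤
      EReal.exp (-((n * KL (empMeas x) P : ℝ≥0∞) : EReal)) *
        (Measure.pi fun _ : Fin n => (empProb hn x : Measure X)) {x} := by
  have := empMeas_isProb hn x
  by_cases h : empMeas x ≪ P
  · have hD := integral_llr_nonneg h Integrable.of_finite
    rw [pi_singleton_eq_exp_neg_mul P hn h, KL_eq_ofReal_integral_llr h,
      ← ENNReal.ofReal_natCast, ← ENNReal.ofReal_mul (Nat.cast_nonneg n),
      EReal.coe_ennreal_ofReal, max_eq_left (by positivity), ← EReal.coe_neg, EReal.exp_coe]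
  · obtain ⟨i, hi⟩ : ∃ i, P {x i} = 0 := by
      by_contra! hP
      exact h (empMeas_absolutelyContinuous hP)
    rw [Measure.pi_singleton, Finset.prod_eq_zero (Finset.mem_univ i) hi]
    exact zero_le

lemma measure_typeClass_le (hn : n ≠ 0) (ν : ProbabilityMeasure X) :
    (Measure.pi fun _ : Fin n => P) {x | empProb hn x = ν} ≤
      EReal.exp (-((n * KL (ν : Measure X) P : ℝ≥0∞) : EReal)) := by
  calc (Measure.pi fun _ : Fin n => P) {x | empProb hn x = ν}
      ≤ EReal.exp (-((n * KL (ν : Measure X) P : ℝ≥0∞) : EReal)) *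
          (Measure.pi fun _ : Fin n => (ν : Measure X)) {x | empProb hn x = ν} :=
        measure_le_mul_of_forall_singleton_le fun x hx => by
          rw [← show empProb hn x = ν from hx]
          exact pi_singleton_le_exp_neg_KL_mul P hn x
    _ ≤ _ := mul_le_of_le_one_right' prob_le_one

end TypeClass

lemma measure_empProb_pair_mem_le {X : Type*} [Fintype X] [MeasurableSpace X]
    [MeasurableSingletonClass X] (P Q : Measure X) [IsProbabilityMeasure P]
    [IsProbabilityMeasure Q] {n m : ℕ} (hn : n ≠ 0) (hm : m ≠ 0)
    (Γ : Set (ProbabilityMeasure X × ProbabilityMeasure X)) (ρ : ℝ)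
    (hρ : ∀ RS ∈ Γ, ENNReal.ofReal (((n : ℝ) + m) * ρ) ≤
      n * KL (RS.1 : Measure X) P + m * KL (RS.2 : Measure X) Q) :
    ((Measure.pi fun _ : Fin n => P).prod (Measure.pi fun _ : Fin m => Q))
        {xy : (Fin n → X) × (Fin m → X) | (empProb hn xy.1, empProb hm xy.2) ∈ Γ} ≤
      (((n + 1) ^ Fintype.card X * (m + 1) ^ Fintype.card X : ℕ) : ℝ≥0∞) *
        ENNReal.ofReal (Real.exp (-(((n : ℝ) + m) * ρ))) := by
  classical
  have hcard : Fintype.card ((X → Fin (n + 1)) × (X → Fin (m + 1))) =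
      (n + 1) ^ Fintype.card X * (m + 1) ^ Fintype.card X := by
    simp
  rw [← hcard]
  refine measure_le_card_mul_of_forall_fiber_le _
    (fun xy : (Fin n → X) × (Fin m → X) => (typeCount xy.1, typeCount xy.2)) fun xy hxy => ?_
  calc _ ≤ ((Measure.pi fun _ : Fin n => P).prod (Measure.pi fun _ : Fin m => Q))
        ({x | empProb hn x = empProb hn xy.1} ×ˢ {y | empProb hm y = empProb hm xy.2}) :=
        measure_mono fun z hz => ⟨empProb_eq_of_typeCount_eq hn (congrArg Prod.fst hz),
          empProb_eq_of_typeCount_eq hm (congrArg Prod.snd hz)⟩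
    _ ≤ EReal.exp (-((n * KL (empProb hn xy.1 : Measure X) P : ℝ≥0∞) : EReal)) *
          EReal.exp (-((m * KL (empProb hm xy.2 : Measure X) Q : ℝ≥0∞) : EReal)) := by
        rw [Measure.prod_prod]
        exact mul_le_mul' (measure_typeClass_le P hn _) (measure_typeClass_le Q hm _)
    _ ≤ EReal.exp (-((ENNReal.ofReal (((n : ℝ) + m) * ρ) : ℝ≥0∞) : EReal)) := by
        rw [← EReal.exp_add, ← sub_eq_add_neg, ← EReal.neg_add
          (.inl (EReal.coe_ennreal_ne_bot _)) (.inr (EReal.coe_ennreal_ne_bot _)),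
          ← EReal.coe_ennreal_add]
        exact EReal.exp_monotone <| EReal.neg_le_neg_iff.2 <|
          EReal.coe_ennreal_le_coe_ennreal_iff.2 (hρ _ hxy)
    _ ≤ ENNReal.ofReal (Real.exp (-(((n : ℝ) + m) * ρ))) := by
        rw [EReal.coe_ennreal_ofReal, ← EReal.coe_neg, EReal.exp_coe]
        exact ENNReal.ofReal_le_ofReal (Real.exp_le_exp.2 (neg_le_neg (le_max_left _ _)))

lemma lt_neg_inv_mul_elog {N r : ℝ} (hN : 0 < N) {p : ℝ≥0∞}
    (hp : p < ENNReal.ofReal (Real.exp (-(N * r)))) :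
    (r : EReal) < ((-(1 / N) : ℝ) : EReal) * elog p := by
  have hcoef : -(1 / N) < 0 := by simpa using hN
  rcases eq_or_ne p 0 with rfl | hp0
  · rw [elog, if_pos rfl, EReal.coe_mul_bot_of_neg hcoef]
    exact EReal.coe_lt_top r
  · have hptop := hp.ne_top
    have hlog : Real.log p.toReal < -(N * r) := (Real.log_lt_iff_lt_exp
      (ENNReal.toReal_pos hp0 hptop)).2 (ENNReal.toReal_lt_of_lt_ofReal hp)
    rw [elog, if_neg hp0, if_neg hptop, ← EReal.coe_mul, EReal.coe_lt_coe_iff]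
    calc r = -(1 / N) * -(N * r) := by field_simp
      _ < -(1 / N) * Real.log p.toReal := mul_lt_mul_of_neg_left hlog hcoef

lemma eventually_pow_mul_exp_lt {r ρ : ℝ} (h : r < ρ) (k : ℕ) :
    ∀ᶠ s : ℝ in atTop, (s + 1) ^ k * Real.exp (-(s * ρ)) < Real.exp (-(s * r)) := by
  have hlim : Tendsto (fun s : ℝ => (s + 1) ^ k * Real.exp (-(ρ - r) * (s + 1))) atTop (nhds 0) :=
    ((tendsto_rpow_mul_exp_neg_mul_atTop_nhds_zero k (ρ - r) (sub_pos.2 h)).comp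
      (tendsto_atTop_add_const_right _ 1 tendsto_id)).congr fun s => by
        simp [Real.rpow_natCast]
  filter_upwards [hlim.eventually_lt_const (Real.exp_pos (-(ρ - r)))] with s hs
  have hsplit : Real.exp (-(s * ρ)) =
      Real.exp (-(ρ - r) * (s + 1)) * Real.exp (ρ - r) * Real.exp (-(s * r)) := by
    rw [← Real.exp_add, ← Real.exp_add]
    ring_nf
  rw [hsplit, ← mul_assoc, ← mul_assoc]
  refine mul_lt_of_lt_one_left (Real.exp_pos _) ?_
  calc _ < Real.exp (-(ρ - r)) * Real.exp (ρ - r) := by gcongr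
    _ = 1 := by rw [← Real.exp_add, neg_add_cancel, Real.exp_zero]

section Asymptotics

variable {ι : Type*} {l : Filter ι}

lemma eventually_mul_le_of_tendsto {f : ι → ℝ≥0∞} {a θ : ℝ≥0∞} (hf : Tendsto f l (nhds a))
    (ha : a ≠ ⊤) (hθ : θ < 1) : ∀ᶠ i in l, θ * a ≤ f i := by
  rcases eq_or_ne a 0 with rfl | ha0
  · simp
  · have : θ * a < a := by
      simpa using (ENNReal.mul_lt_mul_iff_left ha0 ha).2 hθ
    exact (hf.eventually (lt_mem_nhds this)).mono fun _ => le_of_lt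

lemma eventually_le_weighted_of_lt_iInf {κ : Type*} {α : ι → ℝ} {c : ℝ}
    (hα : Tendsto α l (nhds c)) (a b : κ → ℝ≥0∞) {s : Set κ} {q : ℝ≥0∞}
    (hq : q < ⨅ k ∈ s, ENNReal.ofReal c * a k + ENNReal.ofReal (1 - c) * b k) :
    ∀ᶠ i in l, ∀ k ∈ s, q ≤ ENNReal.ofReal (α i) * a k + ENNReal.ofReal (1 - α i) * b k := by
  -- `a` and `b` may be unbounded on `s`, so the slack `q < q'` is used multiplicatively.
  obtain ⟨q', hqq', hq'⟩ := exists_between hq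
  have hq'0 : q' ≠ 0 := (hqq'.trans_le' zero_le).ne'
  have hq'top : q' ≠ ⊤ := hq'.ne_top
  have hθ : q / q' < 1 := (ENNReal.div_lt_iff (.inl hq'0) (.inl hq'top)).2 (by rwa [one_mul])
  have hlim : ∀ {β : ι → ℝ} {d : ℝ}, Tendsto β l (nhds d) →
      ∀ᶠ i in l, q / q' * ENNReal.ofReal d ≤ ENNReal.ofReal (β i) := fun h =>
    eventually_mul_le_of_tendsto ((ENNReal.continuous_ofReal.tendsto _).comp h)
      ENNReal.ofReal_ne_top hθ
  filter_upwards [hlim hα, hlim (hα.const_sub 1)] with i h1 h2 k hk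
  calc q = q / q' * q' := (ENNReal.div_mul_cancel hq'0 hq'top).symm
    _ ≤ q / q' * (ENNReal.ofReal c * a k + ENNReal.ofReal (1 - c) * b k) := by
        gcongr
        exact hq'.le.trans (iInf₂_le k hk)
    _ = q / q' * ENNReal.ofReal c * a k + q / q' * ENNReal.ofReal (1 - c) * b k := by ring
    _ ≤ _ := by gcongr

variable {n m : ι → ℕ}

lemma eventually_card_mul_exp_lt (d : ℕ) (hn : Tendsto n l atTop) {r ρ : ℝ} (h : r < ρ) :
    ∀ᶠ t in l, (((n t + 1) ^ d * (m t + 1) ^ d : ℕ) : ℝ) * Real.exp (-(((n t : ℝ) + m t) * ρ)) <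
      Real.exp (-(((n t : ℝ) + m t) * r)) := by
  have hN : Tendsto (fun t => (n t : ℝ) + m t) l atTop :=
    tendsto_atTop_mono (fun t => le_add_of_nonneg_right (Nat.cast_nonneg _))
      (tendsto_natCast_atTop_atTop.comp hn)
  filter_upwards [hN.eventually (eventually_pow_mul_exp_lt h (2 * d))] with t ht
  refine lt_of_le_of_lt ?_ ht
  rw [two_mul, pow_add]
  push_cast
  gcongr <;> linarith [(Nat.cast_nonneg (n t) : (0 : ℝ) ≤ n t), (Nat.cast_nonneg (m t) : (0 : ℝ) ≤ m t)]

variable {X : Type*} [MeasurableSpace X] (P Q : Measure X)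

lemma eventually_ofReal_mul_le_KL (hn : ∀ t, 0 < n t) {c : ℝ}
    (hc : Tendsto (fun t => (n t : ℝ) / ((n t : ℝ) + (m t : ℝ))) l (nhds c))
    (Γ : Set (ProbabilityMeasure X × ProbabilityMeasure X)) {ρ : ℝ}
    (hρ : ENNReal.ofReal ρ < ⨅ RS ∈ Γ, ENNReal.ofReal c * KL (RS.1 : Measure X) P
      + ENNReal.ofReal (1 - c) * KL (RS.2 : Measure X) Q) :
    ∀ᶠ t in l, ∀ RS ∈ Γ, ENNReal.ofReal (((n t : ℝ) + m t) * ρ) ≤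
      n t * KL (RS.1 : Measure X) P + m t * KL (RS.2 : Measure X) Q := by
  filter_upwards [eventually_le_weighted_of_lt_iInf hc
    (fun RS : ProbabilityMeasure X × ProbabilityMeasure X => KL (RS.1 : Measure X) P)
    (fun RS => KL (RS.2 : Measure X) Q) hρ] with t ht RS hRS
  have hN : 0 < (n t : ℝ) + m t := by have := hn t; positivity
  have hfrac₁ : ((n t : ℝ) + m t) * (n t / ((n t : ℝ) + m t)) = n t := by field_simp
  have hfrac₂ : ((n t : ℝ) + m t) * (1 - n t / ((n t : ℝ) + m t)) = m t := by field_simp; ring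
  calc ENNReal.ofReal (((n t : ℝ) + m t) * ρ)
      = ENNReal.ofReal ((n t : ℝ) + m t) * ENNReal.ofReal ρ := ENNReal.ofReal_mul hN.le
    _ ≤ ENNReal.ofReal ((n t : ℝ) + m t) *
          (ENNReal.ofReal (n t / ((n t : ℝ) + m t)) * KL (RS.1 : Measure X) P +
            ENNReal.ofReal (1 - n t / ((n t : ℝ) + m t)) * KL (RS.2 : Measure X) Q) := by
        gcongr
        exact ht RS hRS
    _ = n t * KL (RS.1 : Measure X) P + m t * KL (RS.2 : Measure X) Q := by
        rw [mul_add, ← mul_assoc, ← mul_assoc, ← ENNReal.ofReal_mul hN.le,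
          ← ENNReal.ofReal_mul hN.le, hfrac₁, hfrac₂, ENNReal.ofReal_natCast,
          ENNReal.ofReal_natCast]

variable [Fintype X] [MeasurableSingletonClass X] [IsProbabilityMeasure P] [IsProbabilityMeasure Q]

lemma eventually_measure_lt_exp (hn : ∀ t, 0 < n t) (hm : ∀ t, 0 < m t)
    (hn' : Tendsto n l atTop) {c : ℝ}
    (hc : Tendsto (fun t => (n t : ℝ) / ((n t : ℝ) + (m t : ℝ))) l (nhds c))
    (Γ : Set (ProbabilityMeasure X × ProbabilityMeasure X)) {r : ℝ}
    (hr : (r : EReal) < ((⨅ RS ∈ Γ, ENNReal.ofReal c * KL (RS.1 : Measure X) P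
      + ENNReal.ofReal (1 - c) * KL (RS.2 : Measure X) Q : ℝ≥0∞) : EReal)) :
    ∀ᶠ t in l, ((Measure.pi fun _ : Fin (n t) => P).prod (Measure.pi fun _ : Fin (m t) => Q))
        {xy : (Fin (n t) → X) × (Fin (m t) → X) |
          (empProb (hn t).ne' xy.1, empProb (hm t).ne' xy.2) ∈ Γ} <
      ENNReal.ofReal (Real.exp (-(((n t : ℝ) + m t) * r))) := by
  rcases lt_or_ge r 0 with hr0 | hr0
  · refine .of_forall fun t => prob_le_one.trans_lt ?_
    have hN : 0 < (n t : ℝ) + m t := by have := hn t; positivity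
    rw [← ENNReal.ofReal_one, ENNReal.ofReal_lt_ofReal_iff (Real.exp_pos _), Real.one_lt_exp_iff]
    exact neg_pos.2 (mul_neg_of_pos_of_neg hN hr0)
  · have hrI := EReal.coe_ennreal_lt_coe_ennreal_iff.1 <|
      (EReal.coe_ennreal_ofReal.trans (by rw [max_eq_left hr0])).trans_lt hr
    obtain ⟨q, hrq, hqI⟩ := exists_between hrI
    rw [← ENNReal.ofReal_toReal hqI.ne_top] at hrq hqI
    have hrρ : r < q.toReal := (ENNReal.ofReal_lt_ofReal_iff_of_nonneg hr0).1 hrq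
    filter_upwards [eventually_ofReal_mul_le_KL P Q hn hc Γ hqI,
      eventually_card_mul_exp_lt (m := m) (Fintype.card X) hn' hrρ] with t hKL hexp
    calc _ ≤ _ := measure_empProb_pair_mem_le P Q (hn t).ne' (hm t).ne' Γ q.toReal hKL
      _ < _ := by
        rw [← ENNReal.ofReal_natCast, ← ENNReal.ofReal_mul (Nat.cast_nonneg _)]
        exact (ENNReal.ofReal_lt_ofReal_iff (Real.exp_pos _)).2 hexp

end Asymptotics

theorem extended_sanov_finite_lower_general
    {X : Type*} [Fintype X] [TopologicalSpace X] [DiscreteTopology X]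
    [MeasurableSpace X] [BorelSpace X]
    (P Q : Measure X) [IsProbabilityMeasure P] [IsProbabilityMeasure Q]
    (n m : ℕ → ℕ) (hn : ∀ t, 0 < n t) (hm : ∀ t, 0 < m t)
    (hn' : Tendsto n atTop atTop)
    (c : ℝ)
    (hc : Tendsto (fun t => (n t : ℝ) / ((n t : ℝ) + (m t : ℝ))) atTop (nhds c))
    (Γ : Set (ProbabilityMeasure X × ProbabilityMeasure X)) :
    Filter.liminf (fun t =>
        ((-(1 / ((n t : ℝ) + (m t : ℝ))) : ℝ) : EReal) *
          elog (((Measure.pi fun _ : Fin (n t) => P).prod (Measure.pi fun _ : Fin (m t) => Q))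
            {xy : (Fin (n t) → X) × (Fin (m t) → X) |
              (empProb (hn t).ne' xy.1, empProb (hm t).ne' xy.2) ∈ Γ})) atTop
      ≥ ((⨅ RS ∈ Γ,
            ENNReal.ofReal c * KL (RS.1 : Measure X) P
              + ENNReal.ofReal (1 - c) * KL (RS.2 : Measure X) Q : ℝ≥0∞) : EReal) := by
  rw [ge_iff_le, le_liminf_iff]
  intro b hb
  obtain ⟨r, hbr, hrI⟩ := EReal.lt_iff_exists_real_btwn.1 hb
  filter_upwards [eventually_measure_lt_exp P Q hn hm hn' hc Γ hrI] with t ht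
  exact hbr.trans (lt_neg_inv_mul_elog (by have := hn t; positivity) ht)

/-- **Extended Sanov theorem, finite sample space, lower bound.** -/
theorem extended_sanov_finite_lower
    {X : Type*} [Fintype X] [TopologicalSpace X] [DiscreteTopology X]
    [MeasurableSpace X] [BorelSpace X]
    (P Q : Measure X) [IsProbabilityMeasure P] [IsProbabilityMeasure Q]
    (n m : ℕ → ℕ) (hn : ∀ t, 0 < n t) (hm : ∀ t, 0 < m t)
    (hn' : Tendsto n atTop atTop) (hm' : Tendsto m atTop atTop)
    (c : ℝ) (hc0 : 0 < c) (hc1 : c < 1)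
    (hc : Tendsto (fun t => (n t : ℝ) / ((n t : ℝ) + (m t : ℝ))) atTop (nhds c))
    (Γ : Set (ProbabilityMeasure X × ProbabilityMeasure X)) :
    Filter.liminf (fun t =>
        ((-(1 / ((n t : ℝ) + (m t : ℝ))) : ℝ) : EReal) *
          elog (((Measure.pi fun _ : Fin (n t) => P).prod (Measure.pi fun _ : Fin (m t) => Q))
            {xy : (Fin (n t) → X) × (Fin (m t) → X) |
              (empProb (hn t).ne' xy.1, empProb (hm t).ne' xy.2) ∈ Γ})) atTop
      ≥ ((⨅ RS ∈ Γ,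
            ENNReal.ofReal c * KL (RS.1 : Measure X) P
              + ENNReal.ofReal (1 - c) * KL (RS.2 : Measure X) Q : ℝ≥0∞) : EReal) :=
  extended_sanov_finite_lower_general P Q n m hn hm hn' c hc Γ
end
end

section
/- Closure via finite partitions: Let X be a Polish space and let Γ be a set of pairs of Borel probability measures on X. For a finite measurable partition A = {A_1,…,A_t} of X, define Γ(A) = { (R,S) : there exists (R',S') ∈ Γ with R(A_i) = R'(A_i) and S(A_i) = S'(A_i) for all i = 1,…,t }. Then the closure of Γ with respect to the product of the weak convergence topologies equals the intersection, over all finite measurable partitions A of X, of the closures of Γ(A) with respect to the product of the weak convergence topologies. -/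
open MeasureTheory Filter Set
open scoped ENNReal NNReal

noncomputable section

/-!
The weak topology is generated by the maps `Q ↦ ∫ f dQ`, `f : X →ᵇ ℝ≥0`, so a basic
neighbourhood of `(R, S)` is given by finitely many test functions `f` and a radius `ε`.
The finitely many measurable sets on which every `⌊f / δ⌋₊` is constant form a partition on
whose cells each `f` oscillates by at most `δ`, and two probability measures agreeing on these
cells integrate each `f` to within `δ` of each other. So if `(R, S)` is approximated to within
`δ` by `Γ(A)`, it is approximated to within `2δ` by `Γ` itself.
-/

open Function Topology BoundedContinuousFunction

section Partition

variable {X : Type*} [MeasurableSpace X]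

def IsMeasurablePartition {ι : Type*} (A : ι → Set X) : Prop :=
  (∀ i, MeasurableSet (A i)) ∧ Pairwise (Disjoint on A) ∧ ⋃ i, A i = univ

theorem lintegral_le_lintegral_add_of_measure_eq_on_partition {ι : Type*} [Countable ι]
    {A : ι → Set X} (hA : IsMeasurablePartition A) {μ ν : Measure X}
    (hμν : ∀ i, μ (A i) = ν (A i)) {f : X → ℝ≥0∞} {c : ι → ℝ≥0∞} {δ : ℝ≥0∞}
    (hf : ∀ i, ∀ x ∈ A i, c i ≤ f x ∧ f x ≤ c i + δ) :
    ∫⁻ x, f x ∂μ ≤ ∫⁻ x, f x ∂ν + δ * ν univ := by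
  obtain ⟨hmeas, hdisj, hcov⟩ := hA
  have sum_cells (m : Measure X) : ∫⁻ x, f x ∂m = ∑' i, ∫⁻ x in A i, f x ∂m := by
    rw [← setLIntegral_univ, ← hcov, lintegral_iUnion hmeas hdisj]
  calc ∫⁻ x, f x ∂μ = ∑' i, ∫⁻ x in A i, f x ∂μ := sum_cells μ
    _ ≤ ∑' i, ∫⁻ _ in A i, (c i + δ) ∂μ :=
      ENNReal.tsum_le_tsum fun i => setLIntegral_mono' (hmeas i) fun x hx => (hf i x hx).2
    _ = ∑' i, c i * ν (A i) + δ * ∑' i, ν (A i) := by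
      simp only [setLIntegral_const, hμν, add_mul, ENNReal.tsum_add, ENNReal.tsum_mul_left]
    _ ≤ ∑' i, ∫⁻ x in A i, f x ∂ν + δ * ν univ := by
      rw [← measure_iUnion hdisj hmeas, hcov]
      gcongr with i
      rw [← setLIntegral_const]
      exact setLIntegral_mono' (hmeas i) fun x hx => (hf i x hx).1
    _ = ∫⁻ x, f x ∂ν + δ * ν univ := by rw [sum_cells ν]

end Partition

namespace MeasureTheory.ProbabilityMeasure

variable {X : Type*} [MeasurableSpace X] [TopologicalSpace X]

theorem dist_testAgainstNN_le_of_measure_eq_on_partition {ι : Type*} [Countable ι]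
    {A : ι → Set X} (hA : IsMeasurablePartition A) {P Q : ProbabilityMeasure X}
    (hPQ : ∀ i, (P : Measure X) (A i) = (Q : Measure X) (A i)) {f : X →ᵇ ℝ≥0} {c : ι → ℝ≥0}
    {δ : ℝ≥0} (hf : ∀ i, ∀ x ∈ A i, c i ≤ f x ∧ f x ≤ c i + δ) :
    dist (P.toFiniteMeasure.testAgainstNN f) (Q.toFiniteMeasure.testAgainstNN f) ≤ δ := by
  have hf' : ∀ i, ∀ x ∈ A i, (c i : ℝ≥0∞) ≤ f x ∧ (f x : ℝ≥0∞) ≤ c i + δ := fun i x hx =>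
    ⟨mod_cast (hf i x hx).1, mod_cast (hf i x hx).2⟩
  have le_add {P Q : ProbabilityMeasure X}
      (h : ∀ i, (P : Measure X) (A i) = (Q : Measure X) (A i)) :
      P.toFiniteMeasure.testAgainstNN f ≤ Q.toFiniteMeasure.testAgainstNN f + δ := by
    rw [← ENNReal.coe_le_coe, ENNReal.coe_add, FiniteMeasure.testAgainstNN_coe_eq,
      FiniteMeasure.testAgainstNN_coe_eq]
    have hint := lintegral_le_lintegral_add_of_measure_eq_on_partition hA h hf'
    rwa [measure_univ, mul_one] at hint
  rw [NNReal.dist_eq, abs_sub_le_iff, sub_le_iff_le_add', sub_le_iff_le_add']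
  exact ⟨mod_cast le_add hPQ, mod_cast le_add fun i => (hPQ i).symm⟩

def weakBall (P : ProbabilityMeasure X) (I : Set (X →ᵇ ℝ≥0)) (ε : ℝ) :
    Set (ProbabilityMeasure X) :=
  {Q | ∀ f ∈ I,
    dist (Q.toFiniteMeasure.testAgainstNN f) (P.toFiniteMeasure.testAgainstNN f) < ε}

theorem mem_weakBall_of_measure_eq_on_partition {ι : Type*} [Countable ι] {A : ι → Set X}
    (hA : IsMeasurablePartition A) {I : Set (X →ᵇ ℝ≥0)} {δ : ℝ≥0}
    (hI : ∀ f ∈ I, ∀ i, ∃ c : ℝ≥0, ∀ x ∈ A i, c ≤ f x ∧ f x ≤ c + δ)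
    {P Q Q' : ProbabilityMeasure X} {ε : ℝ} (hQ : Q ∈ weakBall P I ε)
    (hQ' : ∀ i, (Q' : Measure X) (A i) = (Q : Measure X) (A i)) :
    Q' ∈ weakBall P I (δ + ε) := fun f hf => by
  choose c hc using hI f hf
  exact (dist_triangle _ _ _).trans_lt <| add_lt_add_of_le_of_lt
    (dist_testAgainstNN_le_of_measure_eq_on_partition hA hQ' hc) (hQ f hf)

variable [OpensMeasurableSpace X]

theorem isInducing_testAgainstNN :
    IsInducing fun (Q : ProbabilityMeasure X) (f : X →ᵇ ℝ≥0) =>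
      Q.toFiniteMeasure.testAgainstNN f := by
  have hweak : IsInducing fun (φ : WeakDual ℝ≥0 (X →ᵇ ℝ≥0)) (f : X →ᵇ ℝ≥0) => φ f := ⟨rfl⟩
  have hfin : IsInducing (FiniteMeasure.toWeakDualBCNN (Ω := X)) := ⟨rfl⟩
  exact (hweak.comp hfin).comp (toFiniteMeasure_isEmbedding X).isInducing

theorem hasBasis_nhds_weakBall (P : ProbabilityMeasure X) :
    (𝓝 P).HasBasis (fun Iε : Set (X →ᵇ ℝ≥0) × ℝ => Iε.1.Finite ∧ 0 < Iε.2)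
      fun Iε => weakBall P Iε.1 Iε.2 := by
  rw [isInducing_testAgainstNN.nhds_eq_comap, nhds_pi]
  refine (hasBasis_pi_same_index (fun _ => Metric.nhds_basis_ball) ?_).comap _
  intro I ε hI hε
  obtain ⟨δ, hδ, hδε⟩ : ∃ δ : ℝ, 0 < δ ∧ ∀ f ∈ I, δ < ε f :=
    ((eventually_mem_nhdsWithin (s := Ioi 0) (a := 0)).and ((hI.eventually_all).2
      fun f hf => nhdsWithin_le_nhds (eventually_lt_nhds (hε f hf)))).exists
  exact ⟨δ, hδ, fun f hf => Metric.ball_subset_ball (hδε f hf).le⟩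

theorem hasBasis_nhds_prod_weakBall (P Q : ProbabilityMeasure X) :
    (𝓝 (P, Q)).HasBasis (fun Iε : Set (X →ᵇ ℝ≥0) × ℝ => Iε.1.Finite ∧ 0 < Iε.2)
      fun Iε => weakBall P Iε.1 Iε.2 ×ˢ weakBall Q Iε.1 Iε.2 := by
  rw [nhds_prod_eq]
  refine (hasBasis_nhds_weakBall P).prod_same_index (hasBasis_nhds_weakBall Q) ?_
  rintro ⟨I, ε⟩ ⟨J, δ⟩ ⟨hI, hε⟩ ⟨hJ, hδ⟩
  refine ⟨⟨I ∪ J, min ε δ⟩, ⟨hI.union hJ, lt_min hε hδ⟩, ?_, ?_⟩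
  · exact fun R hR f hf => (hR f (mem_union_left J hf)).trans_le (min_le_left ε δ)
  · exact fun R hR f hf => (hR f (mem_union_right I hf)).trans_le (min_le_right ε δ)

end MeasureTheory.ProbabilityMeasure

theorem exists_isMeasurablePartition_oscillation_le {X : Type*} [MeasurableSpace X]
    [TopologicalSpace X] [OpensMeasurableSpace X] {I : Set (X →ᵇ ℝ≥0)} (hI : I.Finite)
    {δ : ℝ≥0} (hδ : 0 < δ) :
    ∃ (t : ℕ) (A : Fin t → Set X), IsMeasurablePartition A ∧
      ∀ f ∈ I, ∀ i, ∃ c : ℝ≥0, ∀ x ∈ A i, c ≤ f x ∧ f x ≤ c + δ := by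
  have : Finite I := hI
  let g : X → I → ℕ := fun x f => ⌊f.1 x / δ⌋₊
  have hg : Measurable g :=
    measurable_pi_lambda _ fun f => (f.1.continuous.measurable.div_const δ).nat_floor
  have hrange : (range g).Finite := by
    choose C hC using fun f : I => f.1.isBounded_range.bddAbove
    refine (Set.Finite.pi fun f : I => finite_Iic ⌊C f / δ⌋₊).subset ?_
    rintro _ ⟨x, rfl⟩ f -
    exact Nat.floor_le_floor (div_le_div_of_nonneg_right (hC f ⟨x, rfl⟩) δ.2)
  have : Finite (range g) := hrange
  let e := (Finite.equivFin (range g)).symm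
  refine ⟨Nat.card (range g), fun i => g ⁻¹' {(e i).1},
    ⟨fun i => hg (measurableSet_singleton _), fun i j hij => ?_, ?_⟩, fun f hf i => ?_⟩
  · exact (disjoint_singleton.2 (Subtype.coe_injective.ne (e.injective.ne hij))).preimage g
  · refine eq_univ_of_forall fun x => mem_iUnion.2 ⟨e.symm ⟨g x, x, rfl⟩, ?_⟩
    simp only [Equiv.apply_symm_apply]
    rfl
  · refine ⟨(e i).1 ⟨f, hf⟩ * δ, fun x hx => ?_⟩
    obtain ⟨hlow, hup⟩ := (Nat.floor_eq_iff zero_le).1 (congr_fun hx ⟨f, hf⟩)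
    rw [le_div_iff₀ hδ] at hlow
    rw [div_lt_iff₀ hδ, add_one_mul] at hup
    exact ⟨hlow, hup.le⟩

theorem closure_eq_iInter_closure_partition_general
    {X : Type*} [TopologicalSpace X] [MeasurableSpace X] [BorelSpace X]
    (Γ : Set (ProbabilityMeasure X × ProbabilityMeasure X)) :
    closure Γ
      = ⋂ (t : ℕ), ⋂ (A : Fin t → Set X),
          ⋂ (_ : (∀ i, MeasurableSet (A i)) ∧ (Pairwise fun i j => Disjoint (A i) (A j))
            ∧ (⋃ i, A i) = Set.univ),
          closure {RS : ProbabilityMeasure X × ProbabilityMeasure X |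
            ∃ RS' ∈ Γ, ∀ i, (RS.1 : Measure X) (A i) = (RS'.1 : Measure X) (A i)
              ∧ (RS.2 : Measure X) (A i) = (RS'.2 : Measure X) (A i)} := by
  refine Subset.antisymm (subset_iInter₂ fun t A => subset_iInter fun _ =>
    closure_mono fun RS hRS => ⟨RS, hRS, fun _ => ⟨rfl, rfl⟩⟩) ?_
  rintro ⟨R, S⟩ hRS
  have hbasis := ProbabilityMeasure.hasBasis_nhds_prod_weakBall R S
  rw [mem_closure_iff_nhds_basis hbasis]
  rintro ⟨I, ε⟩ ⟨hI, hε : 0 < ε⟩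
  let δ : ℝ≥0 := ⟨ε / 2, (half_pos hε).le⟩
  have hδ : 0 < δ := NNReal.coe_pos.1 (half_pos hε)
  obtain ⟨t, A, hA, hosc⟩ := exists_isMeasurablePartition_oscillation_le hI hδ
  have hRSA := mem_iInter.1 (mem_iInter₂.1 hRS t A) hA
  obtain ⟨⟨R₁, S₁⟩, ⟨⟨R', S'⟩, hΓ, hagree⟩, hR₁, hS₁⟩ :=
    (mem_closure_iff_nhds_basis hbasis).1 hRSA (I, ε / 2) ⟨hI, half_pos hε⟩
  have hεδ : ε = δ + ε / 2 := (add_halves ε).symm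
  refine ⟨(R', S'), hΓ, ?_, ?_⟩ <;> rw [hεδ]
  · exact ProbabilityMeasure.mem_weakBall_of_measure_eq_on_partition hA hosc hR₁
      fun i => (hagree i).1.symm
  · exact ProbabilityMeasure.mem_weakBall_of_measure_eq_on_partition hA hosc hS₁
      fun i => (hagree i).2.symm

/-- **Closure via finite partitions**: the closure of a set of pairs of Borel probability
measures in the product of the weak convergence topologies equals the intersection, over all
finite measurable partitions, of the closures of its partition-wise saturations. -/
theorem closure_eq_iInter_closure_partition
    {X : Type*} [TopologicalSpace X] [PolishSpace X] [MeasurableSpace X] [BorelSpace X]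
    (Γ : Set (ProbabilityMeasure X × ProbabilityMeasure X)) :
    closure Γ
      = ⋂ (t : ℕ), ⋂ (A : Fin t → Set X),
          ⋂ (_ : (∀ i, MeasurableSet (A i)) ∧ (Pairwise fun i j => Disjoint (A i) (A j))
            ∧ (⋃ i, A i) = Set.univ),
          closure {RS : ProbabilityMeasure X × ProbabilityMeasure X |
            ∃ RS' ∈ Γ, ∀ i, (RS.1 : Measure X) (A i) = (RS'.1 : Measure X) (A i)
              ∧ (RS.2 : Measure X) (A i) = (RS'.2 : Measure X) (A i)} :=
  closure_eq_iInter_closure_partition_general Γ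
end
end

section
/- Change-of-measure lower bound on acceptance probabilities: Let (X, Σ) be a measurable space and let P', P, Q be probability measures on X with P' ≪ P, P' ≪ Q, D(P'‖P) < ∞ and D(P'‖Q) < ∞. For ε > 0 and positive integers n, m, define A_n = { (x_1,…,x_n) ∈ X^n : | (1/n)·Σ_{i=1}^n log (dP'/dP)(x_i) − D(P'‖P) | ≤ ε } and B_m = { (y_1,…,y_m) ∈ X^m : | (1/m)·Σ_{j=1}^m log (dP'/dQ)(y_j) − D(P'‖Q) | ≤ ε }. Then for every measurable set C ⊆ A_n × B_m, (P^{⊗n} ⊗ Q^{⊗m})(C) ≥ exp( −n·(D(P'‖P) + ε) − m·(D(P'‖Q) + ε) ) · (P'^{⊗n} ⊗ P'^{⊗m})(C). -/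
/-!
Since `P' ≪ P` and `P' ≪ Q`, the measure `P'^{⊗n} ⊗ P'^{⊗m}` has density
`∏ dP'/dP (x_i) · ∏ dP'/dQ (y_j)` with respect to `P^{⊗n} ⊗ Q^{⊗m}`. Almost everywhere this
density is at most `exp (∑ log dP'/dP (x_i) + ∑ log dP'/dQ (y_j))`, and on `A_n × B_m` the
exponent is at most `n (D(P'‖P) + ε) + m (D(P'‖Q) + ε)`; integrating the density over `C` gives
the bound.
-/

open MeasureTheory Filter Set
open scoped ENNReal NNReal

noncomputable section

/-- Only an inequality because of the junk value `Real.log 0 = 0`. -/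
theorem ENNReal.prod_le_ofReal_exp_sum_log {ι : Type*} {s : Finset ι} {r : ι → ℝ≥0∞}
    (hr : ∀ i ∈ s, r i ≠ ∞) :
    ∏ i ∈ s, r i ≤ ENNReal.ofReal (Real.exp (∑ i ∈ s, Real.log (r i).toReal)) := by
  calc ∏ i ∈ s, r i = ∏ i ∈ s, ENNReal.ofReal (r i).toReal :=
        Finset.prod_congr rfl fun i hi ↦ (ENNReal.ofReal_toReal (hr i hi)).symm
    _ = ENNReal.ofReal (∏ i ∈ s, (r i).toReal) :=
        (ENNReal.ofReal_prod_of_nonneg fun _ _ ↦ ENNReal.toReal_nonneg).symm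
    _ ≤ ENNReal.ofReal (Real.exp (∑ i ∈ s, Real.log (r i).toReal)) := by
        rw [Real.exp_sum]
        exact ENNReal.ofReal_le_ofReal <| Finset.prod_le_prod
          (fun _ _ ↦ ENNReal.toReal_nonneg) fun i _ ↦ Real.le_exp_log _

theorem ENNReal.ofReal_exp_neg_mul_le_of_le_mul {a b : ℝ≥0∞} {t : ℝ}
    (h : a ≤ ENNReal.ofReal (Real.exp t) * b) :
    ENNReal.ofReal (Real.exp (-t)) * a ≤ b := by
  calc ENNReal.ofReal (Real.exp (-t)) * a
      ≤ ENNReal.ofReal (Real.exp (-t)) * (ENNReal.ofReal (Real.exp t) * b) := by gcongr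
    _ = b := by
      rw [← mul_assoc, ← ENNReal.ofReal_mul (Real.exp_pos _).le, ← Real.exp_add,
        neg_add_cancel, Real.exp_zero, ENNReal.ofReal_one, one_mul]

theorem sum_le_mul_of_abs_mean_sub_le {k : ℕ} {f : Fin k → ℝ} {d ε : ℝ}
    (h : |1 / (k : ℝ) * ∑ i, f i - d| ≤ ε) : ∑ i, f i ≤ k * (d + ε) := by
  rcases k.eq_zero_or_pos with rfl | hk
  · simp
  have hmean : 1 / (k : ℝ) * ∑ i, f i ≤ d + ε := by linarith [(abs_le.mp h).2]
  rwa [one_div_mul_eq_div, div_le_iff₀ (by exact_mod_cast hk), mul_comm] at hmean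

namespace MeasureTheory

variable {ι α : Type*} [MeasurableSpace α]

theorem lintegral_fin_nat_prod_eq_prod {n : ℕ}
    {μ : Fin n → Measure α} [∀ i, SigmaFinite (μ i)]
    {f : Fin n → α → ℝ≥0∞} (hf : ∀ i, Measurable (f i)) :
    ∫⁻ x, ∏ i, f i (x i) ∂(Measure.pi μ) = ∏ i, ∫⁻ x, f i x ∂(μ i) := by
  induction n with
  | zero => simp
  | succ n ih =>
    calc
      _ = ∫⁻ x : α × (Fin n → α), f 0 x.1 * ∏ i : Fin n, f i.succ (x.2 i)
          ∂((μ 0).prod (Measure.pi fun i ↦ μ i.succ)) := by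
        rw [← (measurePreserving_piFinSuccAbove μ 0).symm.lintegral_comp_emb
          (MeasurableEquiv.measurableEmbedding _)]
        simp_rw [MeasurableEquiv.piFinSuccAbove_symm_apply, Fin.insertNthEquiv,
          Fin.prod_univ_succ, Fin.insertNth_zero, Equiv.coe_fn_mk, Fin.cons_succ,
          Fin.zero_succAbove, cast_eq, Fin.cons_zero]
      _ = (∫⁻ x, f 0 x ∂μ 0) * ∏ i : Fin n, ∫⁻ x, f i.succ x ∂(μ i.succ) := by
        rw [← ih fun i ↦ hf i.succ, lintegral_prod_mul (f := f 0)
          (g := fun y : Fin n → α ↦ ∏ i, f i.succ (y i)) (hf 0).aemeasurable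
          (Finset.measurable_prod _ fun i _ ↦
            (hf i.succ).comp (measurable_pi_apply i)).aemeasurable]
      _ = ∏ i, ∫⁻ x, f i x ∂(μ i) := (Fin.prod_univ_succ fun i ↦ ∫⁻ x, f i x ∂(μ i)).symm

theorem lintegral_fintype_prod_eq_prod [Fintype ι]
    {μ : ι → Measure α} [∀ i, SigmaFinite (μ i)]
    {f : ι → α → ℝ≥0∞} (hf : ∀ i, Measurable (f i)) :
    ∫⁻ x, ∏ i, f i (x i) ∂(Measure.pi μ) = ∏ i, ∫⁻ x, f i x ∂(μ i) := by
  let e := (Fintype.equivFin ι).symm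
  rw [← (measurePreserving_piCongrLeft μ e).lintegral_comp_emb
    (MeasurableEquiv.measurableEmbedding _)]
  simp_rw [← e.prod_comp, MeasurableEquiv.coe_piCongrLeft, Equiv.piCongrLeft_apply_apply]
  exact lintegral_fin_nat_prod_eq_prod fun i ↦ hf (e i)

theorem Measure.pi_eq_withDensity_prod_rnDeriv [Fintype ι]
    {μ ν : ι → Measure α} [∀ i, SigmaFinite (μ i)] [∀ i, SigmaFinite (ν i)]
    (hνμ : ∀ i, ν i ≪ μ i) :
    Measure.pi ν = (Measure.pi μ).withDensity fun x ↦ ∏ i, (ν i).rnDeriv (μ i) (x i) := by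
  refine Measure.pi_eq fun s hs ↦ ?_
  rw [withDensity_apply _ (.univ_pi hs), Measure.restrict_pi_pi,
    lintegral_fintype_prod_eq_prod fun i ↦ Measure.measurable_rnDeriv _ _]
  exact Finset.prod_congr rfl fun i _ ↦ Measure.setLIntegral_rnDeriv (hνμ i) (s i)

theorem Measure.ae_prod_rnDeriv_le_exp_sum_llr [Fintype ι]
    {μ ν : ι → Measure α} [∀ i, SigmaFinite (μ i)] [∀ i, SigmaFinite (ν i)] :
    ∀ᵐ x ∂(Measure.pi ν),
      ∏ i, (μ i).rnDeriv (ν i) (x i) ≤ ENNReal.ofReal (Real.exp (∑ i, llr (μ i) (ν i) (x i))) := by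
  filter_upwards [eventually_all.2 fun i ↦
    Measure.tendsto_eval_ae_ae.eventually ((μ i).rnDeriv_lt_top (ν i))] with x hx
  exact ENNReal.prod_le_ofReal_exp_sum_log fun i _ ↦ (hx i).ne

theorem withDensity_apply_le_mul_of_ae_le {μ : Measure α}
    {f : α → ℝ≥0∞} {s : Set α} {c : ℝ≥0∞} (hs : MeasurableSet s)
    (hf : ∀ᵐ x ∂μ, x ∈ s → f x ≤ c) :
    μ.withDensity f s ≤ c * μ s := by
  rw [withDensity_apply _ hs, ← setLIntegral_const]
  exact setLIntegral_mono_ae' hs hf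

end MeasureTheory

theorem change_of_measure_lower_bound_general
    {X : Type*} [MeasurableSpace X]
    (P' P Q : Measure X) [IsProbabilityMeasure P'] [IsProbabilityMeasure P]
    [IsProbabilityMeasure Q]
    (hPP : P' ≪ P) (hPQ : P' ≪ Q)
    (ε : ℝ) (n m : ℕ)
    (C : Set ((Fin n → X) × (Fin m → X))) (hC_meas : MeasurableSet C)
    (hC_sub : C ⊆
      {x : Fin n → X |
          |(1 / (n : ℝ)) * ∑ i, llr P' P (x i) - (KL P' P).toReal| ≤ ε} ×ˢ
        {y : Fin m → X |
          |(1 / (m : ℝ)) * ∑ j, llr P' Q (y j) - (KL P' Q).toReal| ≤ ε}) :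
    ((Measure.pi fun _ : Fin n => P).prod (Measure.pi fun _ : Fin m => Q)) C
      ≥ ENNReal.ofReal
          (Real.exp (-(n : ℝ) * ((KL P' P).toReal + ε) - (m : ℝ) * ((KL P' Q).toReal + ε)))
        * ((Measure.pi fun _ : Fin n => P').prod (Measure.pi fun _ : Fin m => P')) C := by
  set a := (n : ℝ) * ((KL P' P).toReal + ε)
  set b := (m : ℝ) * ((KL P' Q).toReal + ε)
  have hdensity : (Measure.pi fun _ : Fin n ↦ P').prod (Measure.pi fun _ : Fin m ↦ P')
      = ((Measure.pi fun _ : Fin n ↦ P).prod (Measure.pi fun _ : Fin m ↦ Q)).withDensity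
          fun p ↦ (∏ i, P'.rnDeriv P (p.1 i)) * ∏ j, P'.rnDeriv Q (p.2 j) := by
    rw [Measure.pi_eq_withDensity_prod_rnDeriv fun _ ↦ hPP,
      Measure.pi_eq_withDensity_prod_rnDeriv fun _ ↦ hPQ, prod_withDensity (by fun_prop)
        (by fun_prop)]
  have hbound : ∀ᵐ p ∂(Measure.pi fun _ : Fin n ↦ P).prod (Measure.pi fun _ : Fin m ↦ Q),
      p ∈ C → (∏ i, P'.rnDeriv P (p.1 i)) * ∏ j, P'.rnDeriv Q (p.2 j)
        ≤ ENNReal.ofReal (Real.exp (a + b)) := by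
    filter_upwards [Measure.quasiMeasurePreserving_fst.ae
        (Measure.ae_prod_rnDeriv_le_exp_sum_llr (μ := fun _ : Fin n ↦ P') (ν := fun _ ↦ P)),
      Measure.quasiMeasurePreserving_snd.ae
        (Measure.ae_prod_rnDeriv_le_exp_sum_llr (μ := fun _ : Fin m ↦ P') (ν := fun _ ↦ Q))]
      with p hfst hsnd hpC
    obtain ⟨hsumP, hsumQ⟩ := hC_sub hpC
    calc _ ≤ ENNReal.ofReal (Real.exp a) * ENNReal.ofReal (Real.exp b) := by
          gcongr
          · exact hfst.trans (by gcongr; exact sum_le_mul_of_abs_mean_sub_le hsumP)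
          · exact hsnd.trans (by gcongr; exact sum_le_mul_of_abs_mean_sub_le hsumQ)
      _ = ENNReal.ofReal (Real.exp (a + b)) := by
          rw [Real.exp_add, ENNReal.ofReal_mul (Real.exp_pos _).le]
  rw [show -(n : ℝ) * ((KL P' P).toReal + ε) - m * ((KL P' Q).toReal + ε) = -(a + b) by ring]
  exact ENNReal.ofReal_exp_neg_mul_le_of_le_mul
    (hdensity ▸ withDensity_apply_le_mul_of_ae_le hC_meas hbound)

/-- **Change-of-measure lower bound on acceptance probabilities.** -/
theorem change_of_measure_lower_bound
    {X : Type*} [MeasurableSpace X]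
    (P' P Q : Measure X) [IsProbabilityMeasure P'] [IsProbabilityMeasure P]
    [IsProbabilityMeasure Q]
    (hPP : P' ≪ P) (hPQ : P' ≪ Q) (hKLP : KL P' P < ⊤) (hKLQ : KL P' Q < ⊤)
    (ε : ℝ) (hε : 0 < ε) (n m : ℕ) (hn : 0 < n) (hm : 0 < m)
    (C : Set ((Fin n → X) × (Fin m → X))) (hC_meas : MeasurableSet C)
    (hC_sub : C ⊆
      {x : Fin n → X |
          |(1 / (n : ℝ)) * ∑ i, llr P' P (x i) - (KL P' P).toReal| ≤ ε} ×ˢ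
        {y : Fin m → X |
          |(1 / (m : ℝ)) * ∑ j, llr P' Q (y j) - (KL P' Q).toReal| ≤ ε}) :
    ((Measure.pi fun _ : Fin n => P).prod (Measure.pi fun _ : Fin m => Q)) C
      ≥ ENNReal.ofReal
          (Real.exp (-(n : ℝ) * ((KL P' P).toReal + ε) - (m : ℝ) * ((KL P' Q).toReal + ε)))
        * ((Measure.pi fun _ : Fin n => P').prod (Measure.pi fun _ : Fin m => P')) C :=
  change_of_measure_lower_bound_general P' P Q hPP hPQ ε n m C hC_meas hC_sub
end
end
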